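/- arXiv:2204.01435 — 3 statements merged into one kernel-verified Lean document; each statement's English description precedes it below -/
import Mathlib

section
/- Let T > 0, let H : ℝ × ℝ → ℝ be C² and uniformly convex in its second variable, let L be the Legendre transform of H, let ϖ : [0,T] → ℝ be continuous, and let u ∈ C¹([0,T] × ℝ) satisfy the Hamilton–Jacobi equation -u_t(t,x) + H(x, ϖ(t) + u_x(t,x)) = 0 on [0,T] × ℝ with u(T,x) = u_T(x). Then for every t ∈ [0,T], every x₀ ∈ ℝ, and every C¹ trajectory x : [t,T] → ℝ with x(t) = x₀, one has ∫_t^T [ L(x(s), ẋ(s)) + ϖ(s) ẋ(s) ] ds + u_T(x(T)) ≥ u(t, x₀). -/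
open Real Set MeasureTheory intervalIntegral

/-!
Along a trajectory `γ`, the map `s ↦ u(s, γ s)` has derivative `u_t + u_x γ' = H(γ, p) + u_x γ'`
with `p = ϖ + u_x`, by the Hamilton–Jacobi equation. The Fenchel–Young inequality
`-p γ' - H(γ, p) ≤ L(γ, γ')` says that minus this derivative is at most `L(γ, γ') + ϖ γ'`;
integrating from `t` to `T` gives the claim. Uniform convexity of `H` is what makes
`L(γ, γ')` integrable: it bounds `L(x, v)` above by a quadratic in `v`, while `p = 0`
bounds it below by `-H(x, 0)`.
-/

section PartialDerivatives

variable {u : ℝ → ℝ → ℝ} {s y : ℝ}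

theorem hasDerivAt_fst_of_differentiableAt
    (hu : DifferentiableAt ℝ (fun q : ℝ × ℝ => u q.1 q.2) (s, y)) :
    HasDerivAt (fun r => u r y) (fderiv ℝ (fun q : ℝ × ℝ => u q.1 q.2) (s, y) (1, 0)) s := by
  exact hu.hasFDerivAt.comp_hasDerivAt s ((hasDerivAt_id' s).prodMk (hasDerivAt_const s y))

theorem hasDerivAt_snd_of_differentiableAt
    (hu : DifferentiableAt ℝ (fun q : ℝ × ℝ => u q.1 q.2) (s, y)) :
    HasDerivAt (fun x => u s x) (fderiv ℝ (fun q : ℝ × ℝ => u q.1 q.2) (s, y) (0, 1)) y :=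
  hu.hasFDerivAt.comp_hasDerivAt y ((hasDerivAt_const y s).prodMk (hasDerivAt_id' y))

theorem ContDiff.continuous_deriv_fst (hu : ContDiff ℝ 1 (fun q : ℝ × ℝ => u q.1 q.2)) :
    Continuous fun q : ℝ × ℝ => deriv (fun r => u r q.2) q.1 :=
  ((hu.continuous_fderiv one_ne_zero).clm_apply continuous_const).congr fun q =>
    (hasDerivAt_fst_of_differentiableAt (hu.differentiable one_ne_zero q)).deriv.symm

theorem ContDiff.continuous_deriv_snd (hu : ContDiff ℝ 1 (fun q : ℝ × ℝ => u q.1 q.2)) :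
    Continuous fun q : ℝ × ℝ => deriv (fun x => u q.1 x) q.2 :=
  ((hu.continuous_fderiv one_ne_zero).clm_apply continuous_const).congr fun q =>
    (hasDerivAt_snd_of_differentiableAt (hu.differentiable one_ne_zero q)).deriv.symm

theorem hasDerivAt_comp_curve {γ : ℝ → ℝ} {γ' : ℝ}
    (hu : DifferentiableAt ℝ (fun q : ℝ × ℝ => u q.1 q.2) (s, γ s)) (hγ : HasDerivAt γ γ' s) :
    HasDerivAt (fun r => u r (γ r))
      (deriv (fun r => u r (γ s)) s + deriv (fun x => u s x) (γ s) * γ') s := by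
  have hcomp : HasDerivAt (fun r => u r (γ r))
      (fderiv ℝ (fun q : ℝ × ℝ => u q.1 q.2) (s, γ s) (1, γ')) s := by
    exact hu.hasFDerivAt.comp_hasDerivAt s ((hasDerivAt_id' s).prodMk hγ)
  have hsplit : ((1 : ℝ), γ') = ((1 : ℝ), (0 : ℝ)) + γ' • ((0 : ℝ), (1 : ℝ)) := by simp
  rw [(hasDerivAt_fst_of_differentiableAt hu).deriv, (hasDerivAt_snd_of_differentiableAt hu).deriv]
  convert hcomp using 1
  rw [hsplit, map_add, map_smul, smul_eq_mul, mul_comm]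

end PartialDerivatives

theorem ConvexOn.add_mul_sub_le_of_hasDerivAt {g : ℝ → ℝ} {g' a : ℝ} (hg : ConvexOn ℝ univ g)
    (ha : HasDerivAt g g' a) (p : ℝ) : g a + g' * (p - a) ≤ g p := by
  rcases lt_trichotomy p a with hpa | rfl | hap
  · have := hg.slope_le_of_hasDerivAt (mem_univ p) (mem_univ a) hpa ha
    rw [slope_def_field, div_le_iff₀ (sub_pos.2 hpa)] at this
    linarith
  · simp
  · have := hg.le_slope_of_hasDerivAt (mem_univ a) (mem_univ p) hap ha
    rw [slope_def_field, le_div_iff₀ (sub_pos.2 hap)] at this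
    linarith

theorem add_deriv_mul_add_sq_le_of_le_deriv_deriv {f : ℝ → ℝ} {θ : ℝ} (hf : Differentiable ℝ f)
    (hf' : Differentiable ℝ (deriv f)) (hθ : ∀ p, θ ≤ deriv (deriv f) p) (a p : ℝ) :
    f a + deriv f a * (p - a) + θ / 2 * (p - a) ^ 2 ≤ f p := by
  set g : ℝ → ℝ := fun p => f p - θ / 2 * p ^ 2
  have hg : ∀ x, HasDerivAt g (deriv f x - θ * x) x := fun x =>
    ((hf x).hasDerivAt.sub ((hasDerivAt_pow 2 x).const_mul (θ / 2))).congr_deriv (by ring)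
  have hg' : deriv g = fun x => deriv f x - θ * x := funext fun x => (hg x).deriv
  have hg'' : ∀ x, HasDerivAt (deriv g) (deriv (deriv f) x - θ) x := fun x => by
    rw [hg']
    exact ((hf' x).hasDerivAt.sub ((hasDerivAt_id' x).const_mul θ)).congr_deriv (by ring)
  have hconv : ConvexOn ℝ univ g :=
    convexOn_univ_of_deriv2_nonneg (fun x => (hg x).differentiableAt)
      (fun x => (hg'' x).differentiableAt) fun x => by
        simpa [(hg'' x).deriv] using hθ x
  linear_combination hconv.add_mul_sub_le_of_hasDerivAt (hg a) p

theorem isLUB_legendre_le {h : ℝ → ℝ} {θ v ℓ : ℝ} (hθ : 0 < θ) (hh : Differentiable ℝ h)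
    (hh' : Differentiable ℝ (deriv h)) (hconv : ∀ p, θ ≤ deriv (deriv h) p)
    (hℓ : IsLUB {z | ∃ p, z = -p * v - h p} ℓ) :
    ℓ ≤ -h 0 + (v + deriv h 0) ^ 2 / (2 * θ) := by
  refine hℓ.2 ?_
  rintro _ ⟨p, rfl⟩
  have hquad := add_deriv_mul_add_sq_le_of_le_deriv_deriv hh hh' hconv 0 p
  have hsq : -(v + deriv h 0) * p - θ / 2 * p ^ 2 ≤ (v + deriv h 0) ^ 2 / (2 * θ) := by
    rw [le_div_iff₀ (by positivity)]
    nlinarith [sq_nonneg (v + deriv h 0 + θ * p)]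
  simp only [sub_zero] at hquad
  linarith

theorem lowerSemicontinuous_of_isLUB {X ι δ : Type*} [TopologicalSpace X] [LinearOrder δ]
    {g : ι → X → δ} {ℓ : X → δ} (hg : ∀ i, LowerSemicontinuous (g i))
    (hℓ : ∀ x, IsLUB (range fun i => g i x) (ℓ x)) : LowerSemicontinuous ℓ := by
  intro x y hy
  obtain ⟨_, ⟨i, rfl⟩, hi⟩ := (lt_isLUB_iff (hℓ x)).1 hy
  filter_upwards [hg i x y hi] with x' hx' using hx'.trans_le ((hℓ x').1 ⟨i, rfl⟩)

theorem lowerSemicontinuous_legendre {H L : ℝ → ℝ → ℝ}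
    (hH : Continuous fun q : ℝ × ℝ => H q.1 q.2)
    (hL : ∀ x v, IsLUB {z | ∃ p, z = -p * v - H x p} (L x v)) :
    LowerSemicontinuous fun q : ℝ × ℝ => L q.1 q.2 := by
  refine lowerSemicontinuous_of_isLUB (g := fun p q => -p * q.2 - H q.1 p)
    (fun p => ((continuous_const.mul continuous_snd).sub
      (hH.comp (continuous_fst.prodMk continuous_const))).lowerSemicontinuous) fun q => ?_
  have hrange : (range fun p => -p * q.2 - H q.1 p) = {z | ∃ p, z = -p * q.2 - H q.1 p} :=
    ext fun _ => exists_congr fun _ => eq_comm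
  exact hrange ▸ hL q.1 q.2

theorem intervalIntegrable_legendre_comp {H L : ℝ → ℝ → ℝ} {θ a b : ℝ} {γ γ' : ℝ → ℝ}
    (hab : a ≤ b) (hH : ContDiff ℝ 2 (fun q : ℝ × ℝ => H q.1 q.2)) (hθ : 0 < θ)
    (hconv : ∀ x p, θ ≤ deriv (fun p' => deriv (fun p'' => H x p'') p') p)
    (hL : ∀ x v, IsLUB {z | ∃ p, z = -p * v - H x p} (L x v))
    (hγ : ContinuousOn γ (Icc a b)) (hγ' : ContinuousOn γ' (Icc a b)) :
    IntervalIntegrable (fun s => L (γ s) (γ' s)) volume a b := by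
  have hH2 : ∀ x, ContDiff ℝ 2 (fun p => H x p) := fun x =>
    hH.comp (contDiff_const.prodMk contDiff_id)
  have hγ0 : ContinuousOn (fun s => (γ s, (0 : ℝ))) (Icc a b) := hγ.prodMk continuousOn_const
  have hlower : ContinuousOn (fun s => -H (γ s) 0) (Icc a b) :=
    (hH.continuous.comp_continuousOn hγ0).neg
  have hupper : ContinuousOn (fun s => -H (γ s) 0 + (γ' s + deriv (fun p => H (γ s) p) 0) ^ 2
      / (2 * θ)) (Icc a b) :=
    hlower.add (((hγ'.add ((hH.of_le one_le_two).continuous_deriv_snd.comp_continuousOn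
      hγ0)).pow 2).div_const _)
  have hmeas : AEStronglyMeasurable (fun s => L (γ s) (γ' s)) (volume.restrict (Icc a b)) :=
    ((lowerSemicontinuous_legendre hH.continuous hL).measurable.comp_aemeasurable
      ((hγ.prodMk hγ').aemeasurable measurableSet_Icc)).aestronglyMeasurable
  rw [intervalIntegrable_iff_integrableOn_Icc_of_le hab]
  refine integrable_of_le_of_le hmeas (ae_restrict_of_forall_mem measurableSet_Icc fun s _ => ?_)
    (ae_restrict_of_forall_mem measurableSet_Icc fun s _ => ?_)
    hlower.integrableOn_Icc hupper.integrableOn_Icc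
  · simpa using (hL (γ s) (γ' s)).1 ⟨0, rfl⟩
  · exact isLUB_legendre_le hθ ((hH2 (γ s)).differentiable two_ne_zero)
      (((hH2 (γ s)).iterate_deriv' 1 1).differentiable one_ne_zero) (hconv (γ s)) (hL _ _)

theorem sub_le_integral_of_hasDerivAt_of_neg_le {F F' f : ℝ → ℝ} {a b : ℝ} (hab : a ≤ b)
    (hF : ∀ s ∈ Icc a b, HasDerivAt F (F' s) s) (hF' : IntervalIntegrable F' volume a b)
    (hf : IntervalIntegrable f volume a b) (hle : ∀ s ∈ Icc a b, -F' s ≤ f s) :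
    F a - F b ≤ ∫ s in a..b, f s :=
  calc F a - F b = ∫ s in a..b, -F' s := by
        rw [intervalIntegral.integral_neg, integral_eq_sub_of_hasDerivAt (by rwa [uIcc_of_le hab]) hF']
        ring
    _ ≤ ∫ s in a..b, f s := integral_mono_on hab hF'.neg hf hle

theorem hj_verification_inequality_general
    (T : ℝ)
    (H : ℝ → ℝ → ℝ) (L : ℝ → ℝ → ℝ) (ϖ : ℝ → ℝ) (u : ℝ → ℝ → ℝ) (uT : ℝ → ℝ)
    -- H is C²
    (hH : ContDiff ℝ 2 (fun q : ℝ × ℝ => H q.1 q.2))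
    -- H is uniformly convex in its second variable: H_pp ≥ θ for some θ > 0
    (hHconv : ∃ θ : ℝ, 0 < θ ∧ ∀ x p : ℝ, θ ≤ deriv (fun p' => deriv (fun p'' => H x p'') p') p)
    -- L is the (finite) Legendre transform of H: L(x,v) = sup_p [-p v - H(x,p)]
    (hL : ∀ x v : ℝ, IsLUB {z : ℝ | ∃ p : ℝ, z = -p * v - H x p} (L x v))
    -- ϖ is continuous on [0,T]
    (hϖ : ContinuousOn ϖ (Icc 0 T))
    -- u is C¹
    (hu : ContDiff ℝ 1 (fun q : ℝ × ℝ => u q.1 q.2))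
    -- Hamilton–Jacobi equation on [0,T] × ℝ
    (hHJ : ∀ t ∈ Icc (0 : ℝ) T, ∀ x : ℝ,
      -(deriv (fun s => u s x) t) + H x (ϖ t + deriv (fun y => u t y) x) = 0)
    -- terminal condition
    (huT : ∀ x : ℝ, u T x = uT x) :
    ∀ t ∈ Icc (0 : ℝ) T, ∀ x₀ : ℝ, ∀ γ γ' : ℝ → ℝ,
      (∀ s ∈ Icc t T, HasDerivAt γ (γ' s) s) →
      ContinuousOn γ' (Icc t T) →
      γ t = x₀ →
      (∫ s in t..T, (L (γ s) (γ' s) + ϖ s * γ' s)) + uT (γ T) ≥ u t x₀ := by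
  intro t ht x₀ γ γ' hγ hγ' hγt
  subst hγt
  obtain ⟨θ, hθ, hconv⟩ := hHconv
  have hγc : ContinuousOn γ (Icc t T) := fun s hs => (hγ s hs).continuousAt.continuousWithinAt
  have hpath : ContinuousOn (fun s => (s, γ s)) (Icc t T) := continuousOn_id.prodMk hγc
  have hdu : ContinuousOn (fun s => deriv (fun r => u r (γ s)) s
      + deriv (fun x => u s x) (γ s) * γ' s) (Icc t T) :=
    (hu.continuous_deriv_fst.comp_continuousOn hpath).add
      ((hu.continuous_deriv_snd.comp_continuousOn hpath).mul hγ')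
  have hf : IntervalIntegrable (fun s => L (γ s) (γ' s) + ϖ s * γ' s) volume t T :=
    (intervalIntegrable_legendre_comp ht.2 hH hθ hconv hL hγc hγ').add
      (((hϖ.mono (Icc_subset_Icc_left ht.1)).mul hγ').intervalIntegrable_of_Icc ht.2)
  have hfenchel : ∀ s ∈ Icc t T, -(deriv (fun r => u r (γ s)) s
      + deriv (fun x => u s x) (γ s) * γ' s) ≤ L (γ s) (γ' s) + ϖ s * γ' s := fun s hs => by
    have hHJs := hHJ s ⟨ht.1.trans hs.1, hs.2⟩ (γ s)
    have hyoung := (hL (γ s) (γ' s)).1 ⟨ϖ s + deriv (fun x => u s x) (γ s), rfl⟩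
    linarith
  have hineq := sub_le_integral_of_hasDerivAt_of_neg_le ht.2
    (fun s hs => hasDerivAt_comp_curve (hu.differentiable one_ne_zero _) (hγ s hs))
    (hdu.intervalIntegrable_of_Icc ht.2) hf hfenchel
  rw [huT] at hineq
  linarith

/-- Hamilton–Jacobi verification inequality.
If `u` is a `C¹` solution of the Hamilton–Jacobi equation
`-u_t + H(x, ϖ(t) + u_x) = 0` with terminal condition `u(T,·) = uT`, where `H` is `C²`
and uniformly convex in its second variable and `L` is the Legendre transform of `H`,
then along every `C¹` trajectory `x(·)` starting at `x₀` at time `t`,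
`∫_t^T [L(x(s), ẋ(s)) + ϖ(s) ẋ(s)] ds + uT(x(T)) ≥ u(t, x₀)`. -/
theorem hj_verification_inequality
    (T : ℝ) (hT : 0 < T)
    (H : ℝ → ℝ → ℝ) (L : ℝ → ℝ → ℝ) (ϖ : ℝ → ℝ) (u : ℝ → ℝ → ℝ) (uT : ℝ → ℝ)
    -- H is C²
    (hH : ContDiff ℝ 2 (fun q : ℝ × ℝ => H q.1 q.2))
    -- H is uniformly convex in its second variable: H_pp ≥ θ for some θ > 0
    (hHconv : ∃ θ : ℝ, 0 < θ ∧ ∀ x p : ℝ, θ ≤ deriv (fun p' => deriv (fun p'' => H x p'') p') p)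
    -- L is the (finite) Legendre transform of H: L(x,v) = sup_p [-p v - H(x,p)]
    (hL : ∀ x v : ℝ, IsLUB {z : ℝ | ∃ p : ℝ, z = -p * v - H x p} (L x v))
    -- ϖ is continuous on [0,T]
    (hϖ : ContinuousOn ϖ (Icc 0 T))
    -- u is C¹
    (hu : ContDiff ℝ 1 (fun q : ℝ × ℝ => u q.1 q.2))
    -- Hamilton–Jacobi equation on [0,T] × ℝ
    (hHJ : ∀ t ∈ Icc (0 : ℝ) T, ∀ x : ℝ,
      -(deriv (fun s => u s x) t) + H x (ϖ t + deriv (fun y => u t y) x) = 0)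
    -- terminal condition
    (huT : ∀ x : ℝ, u T x = uT x) :
    ∀ t ∈ Icc (0 : ℝ) T, ∀ x₀ : ℝ, ∀ γ γ' : ℝ → ℝ,
      (∀ s ∈ Icc t T, HasDerivAt γ (γ' s) s) →
      ContinuousOn γ' (Icc t T) →
      γ t = x₀ →
      (∫ s in t..T, (L (γ s) (γ' s) + ϖ s * γ' s)) + uT (γ T) ≥ u t x₀ :=
  hj_verification_inequality_general T H L ϖ u uT hH hHconv hL hϖ hu hHJ huT
end

section
/- Let T > 0, let L : ℝ × ℝ → ℝ be C² and uniformly convex in its second variable, let H(x,p) = sup_{v ∈ ℝ} [ -p v - L(x,v) ] be finite and C¹, let Q : [0,T] → ℝ be continuous, let u_T be C¹, and let ϖ ∈ C¹([0,T]). Suppose φ ∈ C²([0,T] × ℝ) satisfies: φ_x > 0; φ_x(t,·) is a probability density for every t; the Euler–Lagrange equation ∂_x[ H(x, -L_v(x, -φ_t/φ_x)) ] + ∂_t[ L_v(x, -φ_t/φ_x) + ϖ(t) ] = 0 on (0,T) × ℝ; the terminal condition -L_v(x, -φ_t(T,x)/φ_x(T,x)) - ϖ(T) = u_T'(x); and the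 balance constraint ∫_ℝ ( φ_t + Q φ_x ) dx = 0 for all t. Define m = φ_x and u(t,x) = u_T(x) - ∫_t^T H( x, -L_v( x, -φ_t(s,x)/φ_x(s,x) ) ) ds. Then (u, m, ϖ) solves the MFG price system: -u_t + H(x, ϖ(t) + u_x) = 0, m_t - (H_p(x, ϖ(t) + u_x) m)_x = 0, -∫_ℝ H_p(x, ϖ(t) + u_x) m dx = Q(t) for all t, with u(T,·) = u_T. -/
/-! Write `v = -φ_t / φ_x` for the velocity that transports `φ`, and `p = -L_v(x, v)`.
By construction `u_t = H(x, p)`. The Euler–Lagrange equation says `∂ₓ H(x, p) = ∂ₜ (p - ϖ)`;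
integrating it in time from `t` to `T` and using the terminal condition gives `u_x = p - ϖ`, so
`ϖ + u_x = p` and the Hamilton–Jacobi equation holds. Legendre duality gives `H_p(x, p) = -v`,
hence the flux `H_p m = -v φ_x` is `φ_t`: the transport equation becomes `φ_xt = φ_tx`, and the
balance condition is the balance constraint together with `∫ φ_x = 1`. -/

open Function Set MeasureTheory intervalIntegral

section PartialDeriv

variable {F : Type*} [NormedAddCommGroup F] [NormedSpace ℝ F] {f : ℝ × ℝ → F} {t x : ℝ}

noncomputable def partialFst (f : ℝ × ℝ → F) (q : ℝ × ℝ) : F := fderiv ℝ f q (1, 0)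

noncomputable def partialSnd (f : ℝ × ℝ → F) (q : ℝ × ℝ) : F := fderiv ℝ f q (0, 1)

theorem HasFDerivAt.hasDerivAt_comp_prodMk_left {f' : ℝ × ℝ →L[ℝ] F}
    (hf : HasFDerivAt f f' (t, x)) : HasDerivAt (fun s => f (s, x)) (f' (1, 0)) t :=
  hf.comp_hasDerivAt t ((hasDerivAt_id t).prodMk (hasDerivAt_const t x))

theorem HasFDerivAt.hasDerivAt_comp_prodMk_right {f' : ℝ × ℝ →L[ℝ] F}
    (hf : HasFDerivAt f f' (t, x)) : HasDerivAt (fun y => f (t, y)) (f' (0, 1)) x :=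
  hf.comp_hasDerivAt x ((hasDerivAt_const x t).prodMk (hasDerivAt_id x))

theorem DifferentiableAt.hasDerivAt_partialFst (hf : DifferentiableAt ℝ f (t, x)) :
    HasDerivAt (fun s => f (s, x)) (partialFst f (t, x)) t :=
  hf.hasFDerivAt.hasDerivAt_comp_prodMk_left

theorem DifferentiableAt.hasDerivAt_partialSnd (hf : DifferentiableAt ℝ f (t, x)) :
    HasDerivAt (fun y => f (t, y)) (partialSnd f (t, x)) x :=
  hf.hasFDerivAt.hasDerivAt_comp_prodMk_right

theorem deriv_fun_fst_eq_partialFst {f : ℝ → ℝ → F}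
    (hf : Differentiable ℝ (uncurry f)) (t x : ℝ) :
    deriv (fun s => f s x) t = partialFst (uncurry f) (t, x) :=
  (hf _).hasDerivAt_partialFst.deriv

theorem deriv_fun_snd_eq_partialSnd {f : ℝ → ℝ → F}
    (hf : Differentiable ℝ (uncurry f)) (t x : ℝ) :
    deriv (fun y => f t y) x = partialSnd (uncurry f) (t, x) :=
  (hf _).hasDerivAt_partialSnd.deriv

theorem ContDiff.partialFst {m n : WithTop ℕ∞} (hf : ContDiff ℝ n f) (hmn : m + 1 ≤ n) :
    ContDiff ℝ m (partialFst f) :=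
  (hf.fderiv_right hmn).clm_apply contDiff_const

theorem ContDiff.partialSnd {m n : WithTop ℕ∞} (hf : ContDiff ℝ n f) (hmn : m + 1 ≤ n) :
    ContDiff ℝ m (partialSnd f) :=
  (hf.fderiv_right hmn).clm_apply contDiff_const

theorem ContDiffOn.continuousOn_partialSnd {U : Set (ℝ × ℝ)} (hf : ContDiffOn ℝ 1 f U)
    (hU : IsOpen U) : ContinuousOn (partialSnd f) U :=
  (hf.continuousOn_fderiv_of_isOpen hU le_rfl).clm_apply continuousOn_const

theorem ContDiffAt.deriv_partialFst_eq_deriv_partialSnd (hf : ContDiffAt ℝ 2 f (t, x)) :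
    deriv (fun y => partialFst f (t, y)) x = deriv (fun s => partialSnd f (s, x)) t := by
  have hD : HasFDerivAt (fderiv ℝ f) (fderiv ℝ (fderiv ℝ f) (t, x)) (t, x) :=
    ((hf.fderiv_right (m := 1) le_rfl).differentiableAt one_ne_zero).hasFDerivAt
  have hFst : HasDerivAt (fun y => partialFst f (t, y)) _ x :=
    (hD.clm_apply (hasFDerivAt_const ((1 : ℝ), (0 : ℝ)) _)).hasDerivAt_comp_prodMk_right
  have hSnd : HasDerivAt (fun s => partialSnd f (s, x)) _ t :=
    (hD.clm_apply (hasFDerivAt_const ((0 : ℝ), (1 : ℝ)) _)).hasDerivAt_comp_prodMk_left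
  rw [hFst.deriv, hSnd.deriv]
  simpa using hf.isSymmSndFDerivAt (by simp) (0, 1) (1, 0)

end PartialDeriv

theorem ContDiff.convexOn_univ_of_deriv2_nonneg {ℓ : ℝ → ℝ} (hℓ : ContDiff ℝ 2 ℓ)
    (h : ∀ v, 0 ≤ deriv (deriv ℓ) v) : ConvexOn ℝ univ ℓ :=
  _root_.convexOn_univ_of_deriv2_nonneg (hℓ.differentiable (by norm_num))
    ((contDiff_succ_iff_deriv.1 hℓ).2.2.differentiable one_ne_zero) h

theorem ConvexOn.deriv_legendre_neg_eq {ℓ h : ℝ → ℝ} {v ℓ' : ℝ} (hℓ : ConvexOn ℝ univ ℓ)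
    (hh : ∀ p, IsLUB {z | ∃ w, z = -p * w - ℓ w} (h p)) (hℓv : HasDerivAt ℓ ℓ' v)
    (hhd : DifferentiableAt ℝ h (-ℓ')) : deriv h (-ℓ') = -v := by
  -- the supremum defining `h (-ℓ')` is attained at `v`, so `p ↦ h p + p * v` is minimal at `-ℓ'`
  have hmin : IsMinOn (fun w => ℓ w - ℓ' * w) univ v := by
    refine (hℓ.sub ((LinearMap.mul ℝ ℝ ℓ').concaveOn convex_univ)).isMinOn_of_rightDeriv_eq_zero
      (by simp) ?_
    exact ((hℓv.sub ((hasDerivAt_id v).const_mul ℓ')).hasDerivWithinAt.derivWithin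
      (uniqueDiffWithinAt_Ioi v)).trans (by simp)
  have hval : h (-ℓ') = ℓ' * v - ℓ v := by
    refine (hh (-ℓ')).unique ⟨?_, fun z hz => hz ⟨v, by ring⟩⟩
    rintro z ⟨w, rfl⟩
    have : ℓ v - ℓ' * v ≤ ℓ w - ℓ' * w := hmin (mem_univ w)
    linarith
  have hlocal : IsLocalMin (fun p => h p + p * v) (-ℓ') :=
    Filter.Eventually.of_forall fun p => by
      have := (hh p).1 ⟨v, rfl⟩
      show h (-ℓ') + -ℓ' * v ≤ h p + p * v
      linarith
  have := hlocal.hasDerivAt_eq_zero (hhd.hasDerivAt.add ((hasDerivAt_id _).mul_const v))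
  simp only [one_mul] at this
  linarith

theorem ContinuousOn.hasDerivAt_integral_left {E : Type*} [NormedAddCommGroup E]
    [NormedSpace ℝ E] [CompleteSpace E] {f : ℝ → E} {S : Set ℝ} {a b : ℝ} (hS : IsOpen S)
    (hf : ContinuousOn f S) (hab : uIcc a b ⊆ S) :
    HasDerivAt (fun s => ∫ r in s..b, f r) (-f a) a :=
  integral_hasDerivAt_left ((hf.mono hab).intervalIntegrable)
    (hf.stronglyMeasurableAtFilter hS a (hab left_mem_uIcc))
    (hf.continuousAt (hS.mem_nhds (hab left_mem_uIcc)))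

section ValueFunction

variable {G Λ : ℝ × ℝ → ℝ} {U : Set (ℝ × ℝ)} {ϖ : ℝ → ℝ} {a b : ℝ}

theorem ContinuousOn.continuousOn_comp_prodMk_left (hG : ContinuousOn G U) (x : ℝ) :
    ContinuousOn (fun s => G (s, x)) {s | (s, x) ∈ U} :=
  hG.comp (continuous_id.prodMk continuous_const).continuousOn fun _ hs => hs

theorem hasDerivAt_integral_snd_of_contDiffOn (hU : IsOpen U) (hG : ContDiffOn ℝ 1 G U)
    (hsub : uIcc a b ×ˢ univ ⊆ U) (x : ℝ) :
    HasDerivAt (fun y => ∫ s in a..b, G (s, y)) (∫ s in a..b, partialSnd G (s, x)) x := by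
  have hGx := hG.continuousOn_partialSnd hU
  have hK : uIcc a b ×ˢ Metric.closedBall x 1 ⊆ U :=
    (prod_mono subset_rfl (subset_univ _)).trans hsub
  obtain ⟨C, hC⟩ := (isCompact_uIcc.prod (isCompact_closedBall x 1)).exists_bound_of_continuousOn
    (hGx.mono hK)
  have hslice : ∀ y, uIoc a b ⊆ {s | (s, y) ∈ U} := fun y s hs =>
    hsub ⟨uIoc_subset_uIcc hs, mem_univ y⟩
  refine (hasDerivAt_integral_of_dominated_loc_of_deriv_le (bound := fun _ => C)
    (Metric.ball_mem_nhds x one_pos)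
    (Filter.Eventually.of_forall fun y =>
      ((hG.continuousOn.continuousOn_comp_prodMk_left y).mono (hslice y)).aestronglyMeasurable
        measurableSet_uIoc)
    ((hG.continuousOn.continuousOn_comp_prodMk_left x).mono
      (fun s hs => hsub ⟨hs, mem_univ x⟩)).intervalIntegrable
    (((hGx.continuousOn_comp_prodMk_left x).mono (hslice x)).aestronglyMeasurable
      measurableSet_uIoc)
    (Filter.Eventually.of_forall fun s hs y hy =>
      hC (s, y) ⟨uIoc_subset_uIcc hs, Metric.ball_subset_closedBall hy⟩)
    intervalIntegrable_const
    (Filter.Eventually.of_forall fun s hs y _ =>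
      ((hG.differentiableOn one_ne_zero).differentiableAt
        (hU.mem_nhds (hslice y hs))).hasDerivAt_partialSnd)).2

theorem integral_partialSnd_eq_of_eulerLagrange {x : ℝ} (hU : IsOpen U)
    (hG : ContDiffOn ℝ 1 G U) (hΛ : DifferentiableOn ℝ Λ U) (hϖ : DifferentiableOn ℝ ϖ (Icc a b))
    (hab : a ≤ b) (hsub : Icc a b ×ˢ univ ⊆ U)
    (hEL : ∀ s ∈ Ioo a b, deriv (fun y => G (s, y)) x + deriv (fun s' => Λ (s', x) + ϖ s') s = 0) :
    ∫ s in a..b, partialSnd G (s, x) = Λ (a, x) + ϖ a - (Λ (b, x) + ϖ b) := by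
  have hslice : Icc a b ⊆ {s | (s, x) ∈ U} := fun s hs => hsub ⟨hs, mem_univ x⟩
  have hFTC : ∫ s in a..b, -partialSnd G (s, x) = Λ (b, x) + ϖ b - (Λ (a, x) + ϖ a) := by
    refine integral_eq_sub_of_hasDerivAt_of_le hab
      (((hΛ.continuousOn.continuousOn_comp_prodMk_left x).mono hslice).add hϖ.continuousOn)
      (fun s hs => ?_)
      (((hG.continuousOn_partialSnd hU).continuousOn_comp_prodMk_left x).mono
        (uIcc_of_le hab ▸ hslice)).intervalIntegrable.neg
    have hsU : U ∈ nhds (s, x) := hU.mem_nhds (hslice (Ioo_subset_Icc_self hs))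
    have hd : DifferentiableAt ℝ (fun s' => Λ (s', x) + ϖ s') s :=
      ((hΛ.differentiableAt hsU).comp s
        (differentiableAt_id.prodMk (differentiableAt_const x))).add
        (hϖ.differentiableAt (Icc_mem_nhds hs.1 hs.2))
    have hEL' := hEL s hs
    rw [((hG.differentiableOn one_ne_zero).differentiableAt hsU).hasDerivAt_partialSnd.deriv]
      at hEL'
    exact hd.hasDerivAt.congr_deriv (by linarith)
  rw [intervalIntegral.integral_neg] at hFTC
  linarith

variable {u : ℝ → ℝ → ℝ} {uT : ℝ → ℝ} {t : ℝ}

theorem hasDerivAt_fst_of_eq_sub_integral (hu : ∀ t x, u t x = uT x - ∫ s in t..b, G (s, x))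
    (hU : IsOpen U) (hG : ContinuousOn G U) (hsub : Icc a b ×ˢ univ ⊆ U) (ht : t ∈ Icc a b)
    (x : ℝ) : HasDerivAt (fun s => u s x) (G (t, x)) t := by
  have hslice : uIcc t b ⊆ {s | (s, x) ∈ U} := fun s hs =>
    hsub ⟨Icc_subset_Icc ht.1 le_rfl (uIcc_of_le ht.2 ▸ hs), mem_univ x⟩
  simpa [funext fun s => hu s x] using
    ((hG.continuousOn_comp_prodMk_left x).hasDerivAt_integral_left
      (hU.preimage (continuous_id.prodMk continuous_const))
      hslice).const_sub (uT x)

theorem hasDerivAt_snd_of_eq_sub_integral (hu : ∀ t x, u t x = uT x - ∫ s in t..b, G (s, x))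
    (hU : IsOpen U) (hG : ContDiffOn ℝ 1 G U) (hΛ : DifferentiableOn ℝ Λ U)
    (hϖ : DifferentiableOn ℝ ϖ (Icc a b)) (hsub : Icc a b ×ˢ univ ⊆ U)
    (hEL : ∀ s ∈ Ioo a b, ∀ x,
      deriv (fun y => G (s, y)) x + deriv (fun s' => Λ (s', x) + ϖ s') s = 0)
    (huT : Differentiable ℝ uT) (hterm : ∀ x, -Λ (b, x) - ϖ b = deriv uT x) (ht : t ∈ Icc a b)
    (x : ℝ) : HasDerivAt (fun y => u t y) (-Λ (t, x) - ϖ t) x := by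
  have hsub' : Icc t b ×ˢ univ ⊆ U :=
    (prod_mono (Icc_subset_Icc ht.1 le_rfl) subset_rfl).trans hsub
  have hint := integral_partialSnd_eq_of_eulerLagrange hU hG hΛ
    (hϖ.mono (Icc_subset_Icc ht.1 le_rfl)) ht.2 hsub'
    (fun s hs => hEL s ⟨ht.1.trans_lt hs.1, hs.2⟩ x)
  have hder := (huT x).hasDerivAt.sub
    (hasDerivAt_integral_snd_of_contDiffOn hU hG (uIcc_of_le ht.2 ▸ hsub') x)
  rw [hint, ← hterm x] at hder
  rw [show (fun y => u t y) = _ from funext (hu t)]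
  exact hder.congr_deriv (by ring)

end ValueFunction

theorem neg_integral_eq_of_integral_add_const_mul_eq_zero {α : Type*} [MeasurableSpace α]
    {μ : Measure α} {f g : α → ℝ} {c : ℝ} (hf : Integrable f μ) (hg : Integrable g μ)
    (hg1 : ∫ x, g x ∂μ = 1) (h : ∫ x, (f x + c * g x) ∂μ = 0) : -∫ x, f x ∂μ = c := by
  rw [integral_add hf (hg.const_mul c), MeasureTheory.integral_const_mul, hg1, mul_one] at h
  linarith

section Feedback

variable (L H φ : ℝ → ℝ → ℝ)

noncomputable def velocity (q : ℝ × ℝ) : ℝ :=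
  -(partialFst (uncurry φ) q / partialSnd (uncurry φ) q)

noncomputable def momentum (q : ℝ × ℝ) : ℝ := partialSnd (uncurry L) (q.2, velocity φ q)

noncomputable def hamiltonianAlong (q : ℝ × ℝ) : ℝ := H q.2 (-momentum L φ q)

variable {L H φ}

theorem contDiffOn_velocity (hφ : ContDiff ℝ 2 (uncurry φ)) :
    ContDiffOn ℝ 1 (velocity φ) {q | partialSnd (uncurry φ) q ≠ 0} :=
  ((hφ.partialFst (by norm_num)).contDiffOn.div (hφ.partialSnd (by norm_num)).contDiffOn
    fun _ hq => hq).neg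

theorem contDiffOn_momentum (hL : ContDiff ℝ 2 (uncurry L)) (hφ : ContDiff ℝ 2 (uncurry φ)) :
    ContDiffOn ℝ 1 (momentum L φ) {q | partialSnd (uncurry φ) q ≠ 0} :=
  (hL.partialSnd (by norm_num)).comp_contDiffOn
    (contDiff_snd.contDiffOn.prodMk (contDiffOn_velocity hφ))

theorem contDiffOn_hamiltonianAlong (hH : ContDiff ℝ 1 (uncurry H))
    (hL : ContDiff ℝ 2 (uncurry L)) (hφ : ContDiff ℝ 2 (uncurry φ)) :
    ContDiffOn ℝ 1 (hamiltonianAlong L H φ) {q | partialSnd (uncurry φ) q ≠ 0} :=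
  hH.comp_contDiffOn (contDiff_snd.contDiffOn.prodMk (contDiffOn_momentum hL hφ).neg)

theorem deriv_hamiltonian_momentum_mul_partialSnd (hLcvx : ∀ x, ConvexOn ℝ univ (L x))
    (hL : Differentiable ℝ (uncurry L))
    (hH : ∀ x p, IsLUB {z | ∃ v, z = -p * v - L x v} (H x p))
    (hHd : Differentiable ℝ (uncurry H)) {q : ℝ × ℝ} (hq : partialSnd (uncurry φ) q ≠ 0) :
    deriv (H q.2) (-momentum L φ q) * partialSnd (uncurry φ) q = partialFst (uncurry φ) q := by
  rw [momentum, (hLcvx q.2).deriv_legendre_neg_eq (hH q.2) (hL _).hasDerivAt_partialSnd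
    ((hHd _).hasFDerivAt.hasDerivAt_comp_prodMk_right.differentiableAt), velocity]
  field_simp

end Feedback

theorem potential_to_mfg_general
    (T : ℝ)
    (L H : ℝ → ℝ → ℝ) (Q ϖ : ℝ → ℝ) (uT : ℝ → ℝ) (φ : ℝ → ℝ → ℝ)
    -- L is C² and uniformly convex in its second variable
    (hLreg : ContDiff ℝ 2 (fun q : ℝ × ℝ => L q.1 q.2))
    (hLconv : ∃ θ : ℝ, 0 < θ ∧ ∀ x v : ℝ, θ ≤ deriv (fun v' => deriv (fun v'' => L x v'') v') v)
    -- H(x,p) = sup_v [-p v - L(x,v)] is finite and C¹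
    (hH : ∀ x p : ℝ, IsLUB {z : ℝ | ∃ v : ℝ, z = -p * v - L x v} (H x p))
    (hHreg : ContDiff ℝ 1 (fun q : ℝ × ℝ => H q.1 q.2))
    -- data regularity
    (huT : ContDiff ℝ 1 uT)
    (hϖ : ContDiffOn ℝ 1 ϖ (Icc 0 T))
    -- φ is C² with φ_x > 0 and φ_x(t,·) a probability density for every t
    (hφ : ContDiff ℝ 2 (fun q : ℝ × ℝ => φ q.1 q.2))
    (hφxpos : ∀ t ∈ Icc (0 : ℝ) T, ∀ x : ℝ, 0 < deriv (fun y => φ t y) x)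
    (hφxint : ∀ t ∈ Icc (0 : ℝ) T, Integrable (fun x => deriv (fun y => φ t y) x))
    (hφxprob : ∀ t ∈ Icc (0 : ℝ) T, (∫ x : ℝ, deriv (fun y => φ t y) x) = 1)
    (hφtint : ∀ t ∈ Icc (0 : ℝ) T, Integrable (fun x => deriv (fun s => φ s x) t))
    -- the Euler–Lagrange equation on (0,T) × ℝ
    (hEL : ∀ t ∈ Ioo (0 : ℝ) T, ∀ x : ℝ,
      deriv (fun y => H y
          (-(deriv (fun v => L y v)
            (-(deriv (fun s => φ s y) t / deriv (fun y' => φ t y') y))))) x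
      + deriv (fun s =>
          deriv (fun v => L x v)
            (-(deriv (fun s' => φ s' x) s / deriv (fun y => φ s y) x)) + ϖ s) t = 0)
    -- the terminal condition
    (hterm : ∀ x : ℝ,
      -(deriv (fun v => L x v)
          (-(deriv (fun s => φ s x) T / deriv (fun y => φ T y) x))) - ϖ T
        = deriv uT x)
    -- the balance constraint
    (hbal : ∀ t ∈ Icc (0 : ℝ) T,
      (∫ x : ℝ, (deriv (fun s => φ s x) t + Q t * deriv (fun y => φ t y) x)) = 0) :
    ∀ m u : ℝ → ℝ → ℝ,
      -- m = φ_x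
      (∀ t x : ℝ, m t x = deriv (fun y => φ t y) x) →
      -- u(t,x) = uT(x) - ∫_t^T H(x, -L_v(x, -φ_t(s,x)/φ_x(s,x))) ds
      (∀ t x : ℝ, u t x = uT x - ∫ s in t..T,
        H x (-(deriv (fun v => L x v)
          (-(deriv (fun s' => φ s' x) s / deriv (fun y => φ s y) x))))) →
      -- then (u, m, ϖ) solves the MFG price system:
      -- the Hamilton–Jacobi equation
      ((∀ t ∈ Icc (0 : ℝ) T, ∀ x : ℝ,
        -(deriv (fun s => u s x) t) + H x (ϖ t + deriv (fun y => u t y) x) = 0) ∧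
      -- the transport equation
      (∀ t ∈ Icc (0 : ℝ) T, ∀ x : ℝ,
        deriv (fun s => m s x) t -
          deriv (fun y => deriv (fun p => H y p)
            (ϖ t + deriv (fun y' => u t y') y) * m t y) x = 0) ∧
      -- the balance condition
      (∀ t ∈ Icc (0 : ℝ) T,
        -(∫ x : ℝ, deriv (fun p => H x p) (ϖ t + deriv (fun y => u t y) x) * m t x) = Q t) ∧
      -- terminal condition
      (∀ x : ℝ, u T x = uT x)) := by
  intro m u hm hu
  obtain ⟨θ, hθ, hLvv⟩ := hLconv
  have hφd : Differentiable ℝ (uncurry φ) := hφ.differentiable (by norm_num)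
  have hLd : Differentiable ℝ (uncurry L) := hLreg.differentiable (by norm_num)
  simp only [deriv_fun_fst_eq_partialFst hφd, deriv_fun_snd_eq_partialSnd hφd,
    deriv_fun_snd_eq_partialSnd hLd] at hEL hterm hbal hφxpos hφxint hφxprob hφtint hu hm
  -- `φ_x > 0` only for `t ∈ [0, T]`, so the composite fields are `C¹` on the open set `φ_x ≠ 0`
  set U := {q : ℝ × ℝ | partialSnd (uncurry φ) q ≠ 0}
  have hU : IsOpen U :=
    isOpen_ne_fun (hφ.partialSnd (m := 1) (by norm_num)).continuous continuous_const
  have hsub : Icc 0 T ×ˢ univ ⊆ U := fun q hq => (hφxpos q.1 hq.1 q.2).ne'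
  have hG := contDiffOn_hamiltonianAlong hHreg hLreg hφ
  have hut : ∀ t ∈ Icc 0 T, ∀ x,
      HasDerivAt (fun s => u s x) (hamiltonianAlong L H φ (t, x)) t := fun t =>
    hasDerivAt_fst_of_eq_sub_integral hu hU hG.continuousOn hsub
  have hux : ∀ t ∈ Icc 0 T, ∀ x,
      HasDerivAt (fun y => u t y) (-momentum L φ (t, x) - ϖ t) x := fun t =>
    hasDerivAt_snd_of_eq_sub_integral hu hU hG
      ((contDiffOn_momentum hLreg hφ).differentiableOn one_ne_zero)
      (hϖ.differentiableOn one_ne_zero) hsub hEL (huT.differentiable one_ne_zero) hterm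
  have hLcvx : ∀ x, ConvexOn ℝ univ (L x) := fun x =>
    ContDiff.convexOn_univ_of_deriv2_nonneg (hLreg.comp (contDiff_const.prodMk contDiff_id))
      fun v => hθ.le.trans (hLvv x v)
  have hflux : ∀ t ∈ Icc 0 T, ∀ y, deriv (fun p => H y p) (ϖ t + deriv (fun y' => u t y') y)
      * partialSnd (uncurry φ) (t, y) = partialFst (uncurry φ) (t, y) := fun t ht y => by
    rw [(hux t ht y).deriv, add_sub_cancel]
    exact deriv_hamiltonian_momentum_mul_partialSnd hLcvx hLd hH
      (hHreg.differentiable one_ne_zero) (hsub (mk_mem_prod ht (mem_univ y)))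
  refine ⟨fun t ht x => ?_, fun t ht x => ?_, fun t ht => ?_, fun x => ?_⟩
  · rw [(hut t ht x).deriv, (hux t ht x).deriv, add_sub_cancel]
    exact neg_add_cancel _
  · simp only [hm, hflux t ht]
    rw [ContDiffAt.deriv_partialFst_eq_deriv_partialSnd (f := uncurry φ) hφ.contDiffAt,
      sub_self]
  · simp only [hm, hflux t ht]
    exact neg_integral_eq_of_integral_add_const_mul_eq_zero (hφtint t ht) (hφxint t ht)
      (hφxprob t ht) (hbal t ht)
  · rw [hu, integral_same, sub_zero]

/-- from a solution of the potential (variational) formulation back to the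
MFG price system.  Given `φ` with `φ_x > 0`, `φ_x(t,·)` a probability density, satisfying
the Euler–Lagrange equation, the terminal condition and the balance constraint, setting
`m = φ_x` and `u(t,x) = uT(x) - ∫_t^T H(x, -L_v(x, -φ_t(s,x)/φ_x(s,x))) ds`,
the triple `(u, m, ϖ)` solves the MFG price system. -/
theorem potential_to_mfg
    (T : ℝ) (hT : 0 < T)
    (L H : ℝ → ℝ → ℝ) (Q ϖ : ℝ → ℝ) (uT : ℝ → ℝ) (φ : ℝ → ℝ → ℝ)
    -- L is C² and uniformly convex in its second variable
    (hLreg : ContDiff ℝ 2 (fun q : ℝ × ℝ => L q.1 q.2))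
    (hLconv : ∃ θ : ℝ, 0 < θ ∧ ∀ x v : ℝ, θ ≤ deriv (fun v' => deriv (fun v'' => L x v'') v') v)
    -- H(x,p) = sup_v [-p v - L(x,v)] is finite and C¹
    (hH : ∀ x p : ℝ, IsLUB {z : ℝ | ∃ v : ℝ, z = -p * v - L x v} (H x p))
    (hHreg : ContDiff ℝ 1 (fun q : ℝ × ℝ => H q.1 q.2))
    -- data regularity
    (hQ : ContinuousOn Q (Icc 0 T))
    (huT : ContDiff ℝ 1 uT)
    (hϖ : ContDiffOn ℝ 1 ϖ (Icc 0 T))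
    -- φ is C² with φ_x > 0 and φ_x(t,·) a probability density for every t
    (hφ : ContDiff ℝ 2 (fun q : ℝ × ℝ => φ q.1 q.2))
    (hφxpos : ∀ t ∈ Icc (0 : ℝ) T, ∀ x : ℝ, 0 < deriv (fun y => φ t y) x)
    (hφxint : ∀ t ∈ Icc (0 : ℝ) T, Integrable (fun x => deriv (fun y => φ t y) x))
    (hφxprob : ∀ t ∈ Icc (0 : ℝ) T, (∫ x : ℝ, deriv (fun y => φ t y) x) = 1)
    (hφtint : ∀ t ∈ Icc (0 : ℝ) T, Integrable (fun x => deriv (fun s => φ s x) t))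
    -- the Euler–Lagrange equation on (0,T) × ℝ
    (hEL : ∀ t ∈ Ioo (0 : ℝ) T, ∀ x : ℝ,
      deriv (fun y => H y
          (-(deriv (fun v => L y v)
            (-(deriv (fun s => φ s y) t / deriv (fun y' => φ t y') y))))) x
      + deriv (fun s =>
          deriv (fun v => L x v)
            (-(deriv (fun s' => φ s' x) s / deriv (fun y => φ s y) x)) + ϖ s) t = 0)
    -- the terminal condition
    (hterm : ∀ x : ℝ,
      -(deriv (fun v => L x v)
          (-(deriv (fun s => φ s x) T / deriv (fun y => φ T y) x))) - ϖ T
        = deriv uT x)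
    -- the balance constraint
    (hbal : ∀ t ∈ Icc (0 : ℝ) T,
      (∫ x : ℝ, (deriv (fun s => φ s x) t + Q t * deriv (fun y => φ t y) x)) = 0) :
    ∀ m u : ℝ → ℝ → ℝ,
      -- m = φ_x
      (∀ t x : ℝ, m t x = deriv (fun y => φ t y) x) →
      -- u(t,x) = uT(x) - ∫_t^T H(x, -L_v(x, -φ_t(s,x)/φ_x(s,x))) ds
      (∀ t x : ℝ, u t x = uT x - ∫ s in t..T,
        H x (-(deriv (fun v => L x v)
          (-(deriv (fun s' => φ s' x) s / deriv (fun y => φ s y) x))))) →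
      -- then (u, m, ϖ) solves the MFG price system:
      -- the Hamilton–Jacobi equation
      ((∀ t ∈ Icc (0 : ℝ) T, ∀ x : ℝ,
        -(deriv (fun s => u s x) t) + H x (ϖ t + deriv (fun y => u t y) x) = 0) ∧
      -- the transport equation
      (∀ t ∈ Icc (0 : ℝ) T, ∀ x : ℝ,
        deriv (fun s => m s x) t -
          deriv (fun y => deriv (fun p => H y p)
            (ϖ t + deriv (fun y' => u t y') y) * m t y) x = 0) ∧
      -- the balance condition
      (∀ t ∈ Icc (0 : ℝ) T,
        -(∫ x : ℝ, deriv (fun p => H x p) (ϖ t + deriv (fun y => u t y) x) * m t x) = Q t) ∧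
      -- terminal condition
      (∀ x : ℝ, u T x = uT x)) :=
  potential_to_mfg_general T L H Q ϖ uT φ hLreg hLconv hH hHreg huT hϖ hφ hφxpos hφxint hφxprob
    hφtint hEL hterm hbal
end

section
/- Let T > 0, let L(x,v) = v²/2 (so L_v(x,v) = v and H(x,p) = p²/2), let Q : [0,T] → ℝ be C¹, let u_T ≡ 0, and let m₀ be a C¹, everywhere positive probability density on ℝ with finite first moment; set M₀(x) = ∫_{-∞}^x m₀(y) dy and ϖ(t) = -Q(t). Define φ(t,x) = M₀( x - ∫_0^t Q(s) ds ). Then: (i) φ_x(t,·) = m₀(· - ∫_0^t Q) is a probability density for every t, and -φ_t(t,x)/φ_x(t,x) = Q(t); (ii) φ satisfies the Euler–Lagrange equation ∂_x[ H(x, -L_v(x, -φ_t/φ_x)) ] + ∂_t[ L_v(x, -φ_t/φ_x) + ϖ(t) ] = 0 on (0,T) × ℝ; (iii) φ satisfies the terminal condition -L_v(x, -φ_t(T,x)/φ_x(T,x)) - ϖ(T) = 0 = u_T'(x); and (iv) φ satisfies the integrated balance constraint ∫_ℝ ( φ(t,x) - φ(0,x) ) dx = -∫_0^t Q(s) ds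 for all t ∈ [0,T]. -/
/-!
The potential `φ(t, x) = M₀(x - ∫₀ᵗ Q)` is the CDF `M₀` transported with speed `Q`,
so `φ_t / φ_x = -Q(t)` identically. Hence the Hamiltonian term of the Euler–Lagrange
equation is constant in `x`, the term `L_v + ϖ = Q - Q` vanishes, and so does the terminal
condition. The balance constraint is Fubini: `M₀(x - a) - M₀(x) = ∫ₐ⁰ m₀(x - s) ds`, whose
integral over `x` is `-a ∫ m₀ = -a`.
-/

open Real Set MeasureTheory intervalIntegral

theorem hasDerivAt_integral_Iic {m : ℝ → ℝ} (hm : Integrable m) (hc : Continuous m)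
    (x : ℝ) :
    HasDerivAt (fun z => ∫ y in Iic z, m y) (m x) x := by
  have hsplit : (fun z => ∫ y in Iic z, m y) =
      fun z => (∫ y in Iic 0, m y) + ∫ y in (0 : ℝ)..z, m y := by
    ext z
    rw [← integral_Iic_sub_Iic hm.integrableOn hm.integrableOn, add_sub_cancel]
  rw [hsplit]
  exact (hc.integral_hasStrictDerivAt 0 x).hasDerivAt.const_add _

theorem integral_integral_Iic_sub_sub_integral_Iic {m : ℝ → ℝ} (hm : Integrable m) (a : ℝ) :
    ∫ x, ((∫ y in Iic (x - a), m y) - ∫ y in Iic x, m y) = -a * ∫ y, m y := by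
  have hwindow : ∀ x, (∫ y in Iic (x - a), m y) - ∫ y in Iic x, m y =
      ∫ s in a..0, m (x - s) := by
    intro x
    rw [integral_Iic_sub_Iic hm.integrableOn hm.integrableOn, integral_comp_sub_left, sub_zero]
  have hint : Integrable (Function.uncurry fun s x => m (x - s))
      ((volume.restrict (uIoc a 0)).prod volume) := by
    have hmeas : AEStronglyMeasurable (fun p : ℝ × ℝ => m (p.2 - p.1))
        ((volume.restrict (uIoc a 0)).prod volume) :=
      (hm.aestronglyMeasurable.comp_quasiMeasurePreserving
        (quasiMeasurePreserving_sub_of_right_invariant _ _)).prod_swap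
    refine (integrable_prod_iff hmeas).2
      ⟨Filter.Eventually.of_forall fun s => hm.comp_sub_right s, ?_⟩
    simp_rw [integral_sub_right_eq_self (fun y => ‖m y‖)]
    exact integrableOn_const measure_Ioc_lt_top.ne
  simp_rw [hwindow]
  rw [← intervalIntegral_integral_swap hint]
  simp_rw [integral_sub_right_eq_self m]
  rw [intervalIntegral.integral_const, zero_sub, smul_eq_mul]

section TravellingWave

variable {M m A Q : ℝ → ℝ}

theorem deriv_travellingWave_space (hM : ∀ y, HasDerivAt M (m y) y) (t x : ℝ) :
    deriv (fun y => M (y - A t)) x = m (x - A t) := by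
  rw [deriv_comp_sub_const, (hM _).deriv]

theorem deriv_travellingWave_time (hM : ∀ y, HasDerivAt M (m y) y)
    (hA : ∀ t, HasDerivAt A (Q t) t) (t x : ℝ) :
    deriv (fun s => M (x - A s)) t = m (x - A t) * -Q t :=
  ((hM _).comp t ((hA t).const_sub x)).deriv

theorem deriv_travellingWave_time_div_space (hM : ∀ y, HasDerivAt M (m y) y)
    (hm : ∀ y, m y ≠ 0) (hA : ∀ t, HasDerivAt A (Q t) t) (t x : ℝ) :
    deriv (fun s => M (x - A s)) t / deriv (fun y => M (y - A t)) x = -Q t := by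
  rw [deriv_travellingWave_time hM hA, deriv_travellingWave_space hM,
    mul_div_cancel_left₀ _ (hm _)]

end TravellingWave

theorem quadratic_mfg_potential_solution_general
    (T : ℝ)
    (Q : ℝ → ℝ) (hQ : ContDiff ℝ 1 Q)
    (m₀ : ℝ → ℝ) (M₀ : ℝ → ℝ) (ϖ : ℝ → ℝ) (φ : ℝ → ℝ → ℝ)
    -- m₀ is a C¹, everywhere positive probability density with finite first moment
    (hm₀reg : ContDiff ℝ 1 m₀)
    (hm₀pos : ∀ x : ℝ, 0 < m₀ x)
    (hm₀int : Integrable m₀)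
    (hm₀prob : (∫ x : ℝ, m₀ x) = 1)
    -- M₀ is the CDF of m₀
    (hM₀ : ∀ x : ℝ, M₀ x = ∫ y in Iic x, m₀ y)
    -- ϖ = -Q
    (hϖ : ∀ t : ℝ, ϖ t = -Q t)
    -- φ(t,x) = M₀(x - ∫_0^t Q(s) ds)
    (hφ : ∀ t x : ℝ, φ t x = M₀ (x - ∫ s in (0:ℝ)..t, Q s)) :
    -- (i) φ_x(t,·) is the shifted density, a probability density, and -φ_t/φ_x = Q(t)
    ((∀ t ∈ Icc (0 : ℝ) T,
      (∀ x : ℝ, deriv (fun y => φ t y) x = m₀ (x - ∫ s in (0:ℝ)..t, Q s)) ∧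
      (∀ x : ℝ, 0 ≤ deriv (fun y => φ t y) x) ∧
      Integrable (fun x => deriv (fun y => φ t y) x) ∧
      (∫ x : ℝ, deriv (fun y => φ t y) x) = 1 ∧
      (∀ x : ℝ, -(deriv (fun s => φ s x) t) / deriv (fun y => φ t y) x = Q t)) ∧
    -- (ii) Euler–Lagrange equation on (0,T) × ℝ (with L_v(x,v) = v, H(x,p) = p²/2)
    (∀ t ∈ Ioo (0 : ℝ) T, ∀ x : ℝ,
      deriv (fun y =>
          (-(-(deriv (fun s => φ s y) t / deriv (fun y' => φ t y') y))) ^ 2 / 2) x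
      + deriv (fun s =>
          (-(deriv (fun s' => φ s' x) s / deriv (fun y => φ s y) x)) + ϖ s) t = 0) ∧
    -- (iii) terminal condition: -L_v(x, -φ_t(T,x)/φ_x(T,x)) - ϖ(T) = 0 = uT'(x)
    (∀ x : ℝ,
      -(-(deriv (fun s => φ s x) T / deriv (fun y => φ T y) x)) - ϖ T = 0) ∧
    -- (iv) integrated balance constraint
    (∀ t ∈ Icc (0 : ℝ) T,
      (∫ x : ℝ, (φ t x - φ 0 x)) = -∫ s in (0:ℝ)..t, Q s)) := by
  obtain rfl : M₀ = fun x => ∫ y in Iic x, m₀ y := funext hM₀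
  obtain rfl : ϖ = fun t => -Q t := funext hϖ
  obtain rfl : φ = fun t x => ∫ y in Iic (x - ∫ s in (0:ℝ)..t, Q s), m₀ y := funext₂ hφ
  have hM := hasDerivAt_integral_Iic hm₀int hm₀reg.continuous
  have hA : ∀ t, HasDerivAt (fun t => ∫ s in (0:ℝ)..t, Q s) (Q t) t := fun t =>
    (hQ.continuous.integral_hasStrictDerivAt 0 t).hasDerivAt
  have hspace := deriv_travellingWave_space hM (A := fun t => ∫ s in (0:ℝ)..t, Q s)
  have hratio := deriv_travellingWave_time_div_space hM (fun y => (hm₀pos y).ne') hA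
  refine ⟨fun t _ => ⟨hspace t, ?_, ?_, ?_, ?_⟩, ?_, ?_, ?_⟩
  · exact fun x => (hspace t x).symm ▸ (hm₀pos _).le
  · simpa only [hspace] using hm₀int.comp_sub_right _
  · simpa only [hspace, integral_sub_right_eq_self m₀] using hm₀prob
  · simp only [neg_div, hratio, neg_neg, implies_true]
  · intro t _ x
    simp only [hratio, neg_neg, add_neg_cancel, deriv_const', add_zero]
  · simp only [hratio, neg_neg, sub_self, implies_true]
  · intro t _
    simpa only [integral_same, sub_zero, hm₀prob, mul_one] using
      integral_integral_Iic_sub_sub_integral_Iic hm₀int (∫ s in (0:ℝ)..t, Q s)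

/-- explicit potential for the quadratic price-formation MFG.
With `L(x,v) = v²/2` (so `L_v(x,v) = v`, `H(x,p) = p²/2`), `ϖ = -Q`, zero terminal
cost, and `φ(t,x) = M₀(x - ∫_0^t Q)` where `M₀` is the CDF of `m₀`:
(i) `φ_x(t,·) = m₀(· - ∫_0^t Q)` is a probability density and `-φ_t/φ_x = Q(t)`;
(ii) `φ` satisfies the Euler–Lagrange equation
  `∂_x[H(x, -L_v(x, -φ_t/φ_x))] + ∂_t[L_v(x, -φ_t/φ_x) + ϖ(t)] = 0` on `(0,T) × ℝ`;
(iii) the terminal condition `-L_v(x, -φ_t(T,x)/φ_x(T,x)) - ϖ(T) = 0 = uT'(x)`;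
(iv) the integrated balance constraint `∫_ℝ (φ(t,x) - φ(0,x)) dx = -∫_0^t Q`. -/
theorem quadratic_mfg_potential_solution
    (T : ℝ) (hT : 0 < T)
    (Q : ℝ → ℝ) (hQ : ContDiff ℝ 1 Q)
    (m₀ : ℝ → ℝ) (M₀ : ℝ → ℝ) (ϖ : ℝ → ℝ) (φ : ℝ → ℝ → ℝ)
    -- m₀ is a C¹, everywhere positive probability density with finite first moment
    (hm₀reg : ContDiff ℝ 1 m₀)
    (hm₀pos : ∀ x : ℝ, 0 < m₀ x)
    (hm₀int : Integrable m₀)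
    (hm₀prob : (∫ x : ℝ, m₀ x) = 1)
    (hmoment : Integrable (fun y => |y| * m₀ y))
    -- M₀ is the CDF of m₀
    (hM₀ : ∀ x : ℝ, M₀ x = ∫ y in Iic x, m₀ y)
    -- ϖ = -Q
    (hϖ : ∀ t : ℝ, ϖ t = -Q t)
    -- φ(t,x) = M₀(x - ∫_0^t Q(s) ds)
    (hφ : ∀ t x : ℝ, φ t x = M₀ (x - ∫ s in (0:ℝ)..t, Q s)) :
    -- (i) φ_x(t,·) is the shifted density, a probability density, and -φ_t/φ_x = Q(t)
    ((∀ t ∈ Icc (0 : ℝ) T,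
      (∀ x : ℝ, deriv (fun y => φ t y) x = m₀ (x - ∫ s in (0:ℝ)..t, Q s)) ∧
      (∀ x : ℝ, 0 ≤ deriv (fun y => φ t y) x) ∧
      Integrable (fun x => deriv (fun y => φ t y) x) ∧
      (∫ x : ℝ, deriv (fun y => φ t y) x) = 1 ∧
      (∀ x : ℝ, -(deriv (fun s => φ s x) t) / deriv (fun y => φ t y) x = Q t)) ∧
    -- (ii) Euler–Lagrange equation on (0,T) × ℝ (with L_v(x,v) = v, H(x,p) = p²/2)
    (∀ t ∈ Ioo (0 : ℝ) T, ∀ x : ℝ,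
      deriv (fun y =>
          (-(-(deriv (fun s => φ s y) t / deriv (fun y' => φ t y') y))) ^ 2 / 2) x
      + deriv (fun s =>
          (-(deriv (fun s' => φ s' x) s / deriv (fun y => φ s y) x)) + ϖ s) t = 0) ∧
    -- (iii) terminal condition: -L_v(x, -φ_t(T,x)/φ_x(T,x)) - ϖ(T) = 0 = uT'(x)
    (∀ x : ℝ,
      -(-(deriv (fun s => φ s x) T / deriv (fun y => φ T y) x)) - ϖ T = 0) ∧
    -- (iv) integrated balance constraint
    (∀ t ∈ Icc (0 : ℝ) T,
      (∫ x : ℝ, (φ t x - φ 0 x)) = -∫ s in (0:ℝ)..t, Q s)) :=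
  quadratic_mfg_potential_solution_general T Q hQ m₀ M₀ ϖ φ hm₀reg hm₀pos hm₀int hm₀prob hM₀ hϖ hφ
end
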